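/- Let L ⊆ A* be recognized by a deterministic automaton with k states and fix integers p ≥ 1 and 0 ≤ r < p. Then the language rep_L(pℕ + r) = {w ∈ L : val_L(w) ≡ r mod p} of representations of integers congruent to r modulo p is recognized by a deterministic automaton with at most k·p^k states; in particular it is a rational language. -/

import Mathlib

/-- The radix order on words over a totally ordered alphabet. -/
def radixLt {A : Type*} [LinearOrder A] (u v : List A) : Prop :=
  u.length < v.length ∨ (u.length = v.length ∧ List.Lex (· < ·) u v)

/-- The value of a word `w` in the abstract numeration system given by `L`. -/
noncomputable def ansVal {A : Type*} [LinearOrder A] (L : Set (List A)) (w : List A) : ℕ :=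
  {v ∈ L | radixLt v w}.ncard

/-!
After reading `w`, it suffices to remember the state `δ(w)` together with the vector
`q ↦ #{v <rad w | δ(v) = q}` modulo `p`: the value of `w` is the sum of this vector over the
final states. The vector is updated letter by letter, because the words radix-below `w·a` are
the empty word, the words `u·b` with `u` radix-below `w`, and the words `w·b` with `b < a`; so
the new vector depends only on the old vector, `δ(w)` and `a`. This gives an automaton on
`Q × (ℤ/pℤ)^Q`.
-/

open Finset

theorem List.lex_append_singleton_iff {α : Type*} {r : α → α → Prop} {u v : List α}
    (h : u.length = v.length) (b a : α) :
    Lex r (u ++ [b]) (v ++ [a]) ↔ Lex r u v ∨ u = v ∧ r b a := by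
  induction u generalizing v with
  | nil => cases v <;> simp_all
  | cons x u ih =>
    cases v with
    | nil => simp at h
    | cons y v =>
      simp only [cons_append, cons_lex_cons_iff, ih (by simpa using h), cons.injEq]
      tauto

section RadixOrder

variable {A : Type*} [LinearOrder A]

theorem radixLt.length_le {v w : List A} (h : radixLt v w) : v.length ≤ w.length := by
  rcases h with h | ⟨h, -⟩ <;> omega

theorem radixLt_irrefl (w : List A) : ¬ radixLt w w := by
  rintro (h | ⟨-, h⟩)
  exacts [lt_irrefl _ h, List.lex_irrefl lt_irrefl w h]

theorem not_radixLt_nil (v : List A) : ¬ radixLt v [] := by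
  simp [radixLt]

theorem nil_radixLt_append_singleton (w : List A) (a : A) : radixLt [] (w ++ [a]) :=
  Or.inl (by simp)

theorem radixLt_append_singleton_iff {u w : List A} {b a : A} :
    radixLt (u ++ [b]) (w ++ [a]) ↔ radixLt u w ∨ u = w ∧ b < a := by
  simp only [radixLt, List.length_append, List.length_singleton, add_lt_add_iff_right,
    add_left_inj]
  rcases lt_trichotomy u.length w.length with h | h | h
  · simp [h]
  · simp [h, List.lex_append_singleton_iff h]
  · have : u ≠ w := by rintro rfl; omega
    simp [this, h.ne', h.not_gt]

variable [Fintype A]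

theorem finite_setOf_radixLt (w : List A) : {v | radixLt v w}.Finite :=
  (List.finite_length_le A w.length).subset fun _ => radixLt.length_le

noncomputable def wordsBelow (w : List A) : Finset (List A) :=
  (finite_setOf_radixLt w).toFinset

@[simp]
theorem mem_wordsBelow {v w : List A} : v ∈ wordsBelow w ↔ radixLt v w :=
  Set.Finite.mem_toFinset _

theorem wordsBelow_nil : wordsBelow ([] : List A) = ∅ := by
  ext v
  simp [not_radixLt_nil]

theorem wordsBelow_append_singleton (w : List A) (a : A) :
    wordsBelow (w ++ [a]) = insert []
      ((wordsBelow w ×ˢ univ ∪ {w} ×ˢ ({b | b < a} : Finset A)).image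
        fun x => x.1 ++ [x.2]) := by
  have concat_injective : Function.Injective fun x : List A × A => x.1 ++ [x.2] :=
    fun x y h => Prod.ext_iff.2 (List.append_singleton_inj.1 h)
  ext v
  rcases v.eq_nil_or_concat' with rfl | ⟨u, b, rfl⟩
  · simp [nil_radixLt_append_singleton]
  · rw [mem_insert, mem_wordsBelow, radixLt_append_singleton_iff,
      concat_injective.mem_finset_image (a := (u, b))]
    simp only [mem_union, mem_product, mem_wordsBelow, mem_univ, and_true,
      mem_singleton, mem_filter, true_and, List.append_eq_nil_iff, List.cons_ne_nil, and_false,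
      false_or]

theorem sum_wordsBelow_append_singleton {M : Type*} [AddCommMonoid M] (f : List A → M)
    (w : List A) (a : A) :
    ∑ v ∈ wordsBelow (w ++ [a]), f v =
      f [] + ∑ u ∈ wordsBelow w, ∑ b, f (u ++ [b]) + ∑ b with b < a, f (w ++ [b]) := by
  have disjoint : Disjoint (wordsBelow w ×ˢ univ) ({w} ×ˢ ({b | b < a} : Finset A)) :=
    disjoint_left.2 fun x hx hx' => radixLt_irrefl w <| by
      simp only [mem_product, mem_wordsBelow, mem_singleton] at hx hx'
      exact hx'.1 ▸ hx.1
  rw [wordsBelow_append_singleton, sum_insert (by simp), sum_image (by simp),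
    sum_union disjoint, sum_product, sum_product, sum_singleton, add_assoc]

theorem ansVal_eq_card_filter (L : Set (List A)) (w : List A) [DecidablePred (· ∈ L)] :
    ansVal L w = #{v ∈ wordsBelow w | v ∈ L} := by
  rw [ansVal, ← Set.ncard_coe_finset, coe_filter]
  simp only [mem_wordsBelow, and_comm]

end RadixOrder

section CountingAutomaton

variable {A : Type*} [Fintype A] [LinearOrder A] {Q : Type*} [DecidableEq Q]
  (M : DFA A Q)

noncomputable def stateCount (w : List A) (q : Q) : ℕ :=
  #{v ∈ wordsBelow w | M.eval v = q}

theorem stateCount_nil (q : Q) : stateCount M [] q = 0 := by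
  simp [stateCount, wordsBelow_nil]

variable [Fintype Q]

theorem stateCount_append_singleton (w : List A) (a : A) (q : Q) :
    stateCount M (w ++ [a]) q =
      (if M.start = q then 1 else 0) + ∑ q', stateCount M w q' * #{b | M.step q' b = q}
        + #{b | b < a ∧ M.step (M.eval w) b = q} := by
  have regroup : ∑ u ∈ wordsBelow w, #{b | M.step (M.eval u) b = q} =
      ∑ q', stateCount M w q' * #{b | M.step q' b = q} := by
    rw [← sum_fiberwise' (wordsBelow w) M.eval fun q' => #{b | M.step q' b = q}]
    simp only [sum_const, smul_eq_mul, stateCount]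
  rw [stateCount, card_filter, sum_wordsBelow_append_singleton]
  simp only [DFA.eval_append_singleton, DFA.eval_nil, regroup, ← card_filter, filter_filter]
  rfl

theorem ansVal_accepts_eq_sum_stateCount [DecidablePred (· ∈ M.accept)] (w : List A) :
    ansVal M.accepts w = ∑ q with q ∈ M.accept, stateCount M w q := by
  classical
  refine (ansVal_eq_card_filter _ w).trans ?_
  rw [card_eq_sum_card_fiberwise (f := M.eval) (t := {q | q ∈ M.accept})
    fun v hv => by simpa using (M.mem_accepts.1 (mem_filter.1 hv).2)]
  refine sum_congr rfl fun q hq => ?_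
  rw [stateCount, filter_filter]
  refine congrArg card (filter_congr fun v _ => ?_)
  simp only [and_iff_right_iff_imp]
  rintro rfl
  exact (mem_filter.1 hq).2

variable (R : Type*) [Semiring R] (good : R → Prop) [DecidablePred (· ∈ M.accept)]

noncomputable def countDFA : DFA A (Q × (Q → R)) where
  step x a := (M.step x.1 a, fun q =>
    (if M.start = q then 1 else 0) + ∑ q', x.2 q' * #{b | M.step q' b = q}
      + #{b | b < a ∧ M.step x.1 b = q})
  start := (M.start, 0)
  accept := {x | x.1 ∈ M.accept ∧ good (∑ q with q ∈ M.accept, x.2 q)}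

theorem countDFA_eval (w : List A) :
    (countDFA M R good).eval w = (M.eval w, fun q => (stateCount M w q : R)) := by
  induction w using List.reverseRecOn with
  | nil => ext q <;> simp [countDFA, stateCount_nil]
  | append_singleton w a ih =>
    rw [DFA.eval_append_singleton, ih, DFA.eval_append_singleton]
    ext q
    · rfl
    · simp only [countDFA, stateCount_append_singleton]
      push_cast
      rfl

theorem mem_countDFA_accepts {w : List A} :
    w ∈ (countDFA M R good).accepts ↔ w ∈ M.accepts ∧ good (ansVal M.accepts w : R) := by
  rw [DFA.mem_accepts, countDFA_eval, ansVal_accepts_eq_sum_stateCount, Nat.cast_sum]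
  rfl

end CountingAutomaton

theorem rep_of_arith_progression_regular_general {A : Type*} [Fintype A] [LinearOrder A]
    {Q : Type*} [Fintype Q] (k : ℕ) (hk : Fintype.card Q = k)
    (M : DFA A Q) (L : Language A) (hM : M.accepts = L)
    (p r : ℕ) (hp : 1 ≤ p) :
    ∃ (Q' : Type) (_ : Fintype Q') (M' : DFA A Q'),
      Fintype.card Q' ≤ k * p ^ k ∧
      M'.accepts = {w | w ∈ L ∧ ansVal L w % p = r} := by
  classical
  have : NeZero p := ⟨by omega⟩
  let M₀ : DFA A (Fin k) := DFA.reindex (Fintype.equivFinOfCardEq hk) M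
  refine ⟨Fin k × (Fin k → ZMod p), inferInstance, countDFA M₀ (ZMod p) (·.val = r), ?_, ?_⟩
  · simp
  · ext w
    rw [mem_countDFA_accepts, DFA.accepts_reindex, hM, ZMod.val_natCast]
    rfl

/-- If `L` is recognized by a deterministic automaton with `k` states, then for
`p ≥ 1` and `r < p`, the language of representations of the integers congruent
to `r` mod `p` is recognized by a deterministic automaton with at most `k·p^k`
states; in particular it is regular. -/
theorem rep_of_arith_progression_regular {A : Type*} [Fintype A] [LinearOrder A]
    {Q : Type*} [Fintype Q] (k : ℕ) (hk : Fintype.card Q = k)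
    (M : DFA A Q) (L : Language A) (hM : M.accepts = L)
    (hinf : (L : Set (List A)).Infinite)
    (p r : ℕ) (hp : 1 ≤ p) (hr : r < p) :
    ∃ (Q' : Type) (_ : Fintype Q') (M' : DFA A Q'),
      Fintype.card Q' ≤ k * p ^ k ∧
      M'.accepts = {w | w ∈ L ∧ ansVal L w % p = r} :=
  rep_of_arith_progression_regular_general k hk M L hM p r hp
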